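/- arXiv:2509.25253 — 2 statements merged into one kernel-verified Lean document; each statement's English description precedes it below -/
import Mathlib

section
/- Let R_s ∈ ℝ^{n×d_s} and R_t ∈ ℝ^{n×d_t} satisfy R_sR_sᵀ = R_tR_tᵀ. Then the nuclear norm ‖R_sᵀR_t‖_* equals tr(R_sR_sᵀ), and consequently the kernel Procrustes distance tr(R_sR_sᵀ) + tr(R_tR_tᵀ) − 2‖R_sᵀR_t‖_* equals 0. -/
open Matrix

noncomputable def nuclearNorm {m p : ℕ} (M : Matrix (Fin m) (Fin p) ℝ) : ℝ :=
  ∑ i, Real.sqrt ((Matrix.posSemidef_conjTranspose_mul_self M).1.eigenvalues i)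

noncomputable def frob {m p : ℕ} (M : Matrix (Fin m) (Fin p) ℝ) : ℝ :=
  Real.sqrt (∑ i, ∑ j, (M i j)^2)

/-!
The nuclear norm of `M` is the trace of `√(Mᵀ M)`. For `M = R_sᵀ R_t` the Gram hypothesis gives
`Mᵀ M = R_tᵀ (R_s R_sᵀ) R_t = (R_tᵀ R_t)²`, so `√(Mᵀ M) = R_tᵀ R_t` and
`‖M‖_* = tr (R_tᵀ R_t) = tr (R_t R_tᵀ) = tr (R_s R_sᵀ)`.
-/

open scoped MatrixOrder ComplexOrder

theorem Matrix.PosSemidef.trace_sqrt {𝕜 ι : Type*} [RCLike 𝕜] [Fintype ι] [DecidableEq ι]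
    {B : Matrix ι ι 𝕜} (hB : B.PosSemidef) :
    (CFC.sqrt B).trace = ∑ i, ((√(hB.1.eigenvalues i) : ℝ) : 𝕜) := by
  rw [CFC.sqrt_eq_cfc, cfc_nnreal_eq_real _ B, hB.1.cfc_eq, IsHermitian.cfc,
    Unitary.conjStarAlgAut_apply, trace_mul_cycle,
    Unitary.coe_star_mul_self hB.1.eigenvectorUnitary, one_mul, trace_diagonal]
  simp [hB.eigenvalues_nonneg]

theorem Matrix.posSemidef_transpose_mul_self {m ι : Type*} [Fintype m] [Fintype ι]
    (M : Matrix m ι ℝ) : (Mᵀ * M).PosSemidef := by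
  simpa only [conjTranspose_eq_transpose_of_trivial] using posSemidef_conjTranspose_mul_self M

theorem nuclearNorm_eq_trace_sqrt {m p : ℕ} (M : Matrix (Fin m) (Fin p) ℝ) :
    nuclearNorm M = (CFC.sqrt (Mᵀ * M)).trace := by
  rw [← conjTranspose_eq_transpose_of_trivial, (posSemidef_conjTranspose_mul_self M).trace_sqrt]
  rfl

theorem nuclearNorm_eq_trace_of_transpose_mul_self_eq {m p : ℕ} {M : Matrix (Fin m) (Fin p) ℝ}
    {A : Matrix (Fin p) (Fin p) ℝ} (hA : A.PosSemidef) (hM : Mᵀ * M = A * A) :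
    nuclearNorm M = A.trace := by
  rw [nuclearNorm_eq_trace_sqrt,
    (CFC.sqrt_eq_iff _ A (posSemidef_transpose_mul_self M).nonneg hA.nonneg).mpr hM.symm]

theorem Matrix.transpose_mul_transpose_mul_self_of_mul_transpose_eq {R n a b : Type*}
    [CommRing R] [Fintype n] [Fintype a] [Fintype b] {Rs : Matrix n a R} {Rt : Matrix n b R}
    (h : Rs * Rsᵀ = Rt * Rtᵀ) :
    (Rsᵀ * Rt)ᵀ * (Rsᵀ * Rt) = (Rtᵀ * Rt) * (Rtᵀ * Rt) :=
  calc (Rsᵀ * Rt)ᵀ * (Rsᵀ * Rt) = Rtᵀ * (Rs * Rsᵀ) * Rt := by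
        simp only [transpose_mul, transpose_transpose, Matrix.mul_assoc]
    _ = (Rtᵀ * Rt) * (Rtᵀ * Rt) := by rw [h]; simp only [Matrix.mul_assoc]

theorem gram_eq_implies_procrustes_zero {n ds dt : ℕ}
    (Rs : Matrix (Fin n) (Fin ds) ℝ) (Rt : Matrix (Fin n) (Fin dt) ℝ)
    (h : Rs * Rsᵀ = Rt * Rtᵀ) :
    nuclearNorm (Rsᵀ * Rt) = (Rs * Rsᵀ).trace ∧
      (Rs * Rsᵀ).trace + (Rt * Rtᵀ).trace - 2 * nuclearNorm (Rsᵀ * Rt) = 0 := by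
  have key : nuclearNorm (Rsᵀ * Rt) = (Rs * Rsᵀ).trace := by
    rw [nuclearNorm_eq_trace_of_transpose_mul_self_eq (posSemidef_transpose_mul_self Rt)
      (transpose_mul_transpose_mul_self_of_mul_transpose_eq h), trace_mul_comm, h]
  exact ⟨key, by rw [key, h]; ring⟩
end

section
/- For matrices R_s ∈ ℝ^{n×d_s} and R_t ∈ ℝ^{n×d_t}, the kernel Procrustes distance D_P² = tr(R_tR_tᵀ) + tr(R_sR_sᵀ) − 2‖R_sᵀR_t‖_* is zero if and only if the Gram matrices are equal: R_sR_sᵀ = R_tR_tᵀ. -/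
/-!
Let `Q` be the partial isometry of the polar decomposition of `Rsᵀ Rt`, so that
`‖Rsᵀ Rt‖_* = tr (Rs Q Rtᵀ)`. Because `Q Qᵀ Q = Q`, the Procrustes quantity is a sum of two
squared Frobenius norms, `‖Rs Q - Rt‖² + ‖Rs - Rs Q Qᵀ‖²`. If it vanishes then `Rt = Rs Q` and
`Rs = Rs Q Qᵀ`, hence `Rt Rtᵀ = Rs Q Qᵀ Rsᵀ = Rs Rsᵀ`. Conversely, if the Gram matrices agree then
`(Rsᵀ Rt)ᵀ (Rsᵀ Rt) = (Rtᵀ Rt)ᵀ (Rtᵀ Rt)`, so `‖Rsᵀ Rt‖_* = ‖Rtᵀ Rt‖_* ≥ tr (Rtᵀ Rt) = tr (Rt Rtᵀ)`,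
and the quantity is also `≤ 0`.
-/

open Matrix

namespace Matrix

variable {ι κ ν : Type*} [Fintype κ] [Fintype ν]

theorem trace_mul_transpose_self_nonneg [Fintype ι] (A : Matrix ι κ ℝ) : 0 ≤ (A * Aᵀ).trace := by
  simpa [conjTranspose_eq_transpose_of_trivial] using
    (posSemidef_self_mul_conjTranspose A).trace_nonneg

theorem trace_mul_transpose_self_eq_zero_iff [Fintype ι] {A : Matrix ι κ ℝ} :
    (A * Aᵀ).trace = 0 ↔ A = 0 := by
  simpa [conjTranspose_eq_transpose_of_trivial] using
    trace_mul_conjTranspose_self_eq_zero_iff (A := A)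

theorem diag_le_sqrt_diag_transpose_mul_self (K : Matrix κ κ ℝ) (i : κ) :
    K i i ≤ √((Kᵀ * K) i i) := by
  refine (le_abs_self _).trans (Real.abs_le_sqrt ?_)
  rw [mul_apply, sq]
  exact Finset.single_le_sum (f := fun k => Kᵀ i k * K k i) (fun k _ => mul_self_nonneg _)
    (Finset.mem_univ i)

theorem trace_le_sum_sqrt_diag_transpose_mul_self (K : Matrix κ κ ℝ) :
    K.trace ≤ ∑ i, √((Kᵀ * K) i i) :=
  Finset.sum_le_sum fun i _ => diag_le_sqrt_diag_transpose_mul_self K i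

theorem sub_mul_mul_transpose_mul_transpose_eq (X : Matrix ι κ ℝ) {Q : Matrix κ ν ℝ}
    (hQ : Q * Qᵀ * Q = Q) :
    (X - X * Q * Qᵀ) * (X - X * Q * Qᵀ)ᵀ = X * Xᵀ - X * Q * (X * Q)ᵀ := by
  have hQ' : Q * (Qᵀ * (Q * (Qᵀ * Xᵀ))) = Q * (Qᵀ * Xᵀ) := by
    simp only [← Matrix.mul_assoc, hQ]
  simp only [transpose_sub, transpose_mul, transpose_transpose, Matrix.sub_mul, Matrix.mul_sub,
    Matrix.mul_assoc, hQ']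
  abel

theorem trace_add_trace_sub_two_mul_trace_eq [Fintype ι] (X : Matrix ι κ ℝ) (Y : Matrix ι ν ℝ)
    {Q : Matrix κ ν ℝ} (hQ : Q * Qᵀ * Q = Q) :
    (X * Xᵀ).trace + (Y * Yᵀ).trace - 2 * (X * Q * Yᵀ).trace =
      ((X * Q - Y) * (X * Q - Y)ᵀ).trace + ((X - X * Q * Qᵀ) * (X - X * Q * Qᵀ)ᵀ).trace := by
  have hcross : (Y * (X * Q)ᵀ).trace = (X * Q * Yᵀ).trace := by
    rw [← trace_transpose, transpose_mul, transpose_transpose]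
  rw [sub_mul_mul_transpose_mul_transpose_eq X hQ]
  simp only [transpose_sub, Matrix.sub_mul, Matrix.mul_sub, trace_sub, hcross]
  ring

end Matrix

theorem exists_orthogonal_diagonalization_transpose_mul_self {m p : ℕ}
    (M : Matrix (Fin m) (Fin p) ℝ) :
    ∃ (V : Matrix (Fin p) (Fin p) ℝ) (d : Fin p → ℝ), Vᵀ * V = 1 ∧ V * Vᵀ = 1 ∧
      Vᵀ * (Mᵀ * M) * V = diagonal d ∧ (∀ i, 0 ≤ d i) ∧ nuclearNorm M = ∑ i, √(d i) := by
  have hM := posSemidef_conjTranspose_mul_self M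
  have hdiag := hM.1.conjStarAlgAut_star_eigenvectorUnitary
  have hVV := Matrix.UnitaryGroup.star_mul_self hM.1.eigenvectorUnitary
  rw [Unitary.conjStarAlgAut_apply, Unitary.coe_star, star_star] at hdiag
  simp only [star_eq_conjTranspose, conjTranspose_eq_transpose_of_trivial] at hdiag hVV
  exact ⟨_, _, hVV, mul_eq_one_comm.mp hVV, hdiag, hM.eigenvalues_nonneg, rfl⟩

theorem nuclearNorm_eq_of_transpose_mul_self_eq {m m' p : ℕ} {M : Matrix (Fin m) (Fin p) ℝ}
    {N : Matrix (Fin m') (Fin p) ℝ} (h : Mᵀ * M = Nᵀ * N) : nuclearNorm M = nuclearNorm N := by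
  have eigenvalues_congr : ∀ {A B : Matrix (Fin p) (Fin p) ℝ} (hA : A.IsHermitian)
      (hB : B.IsHermitian), A = B → hA.eigenvalues = hB.eigenvalues := by
    rintro _ _ _ _ rfl; rfl
  unfold nuclearNorm
  rw [eigenvalues_congr _ (posSemidef_conjTranspose_mul_self N).1
    (by simpa only [conjTranspose_eq_transpose_of_trivial] using h)]

theorem trace_le_nuclearNorm {p : ℕ} (N : Matrix (Fin p) (Fin p) ℝ) :
    N.trace ≤ nuclearNorm N := by
  obtain ⟨V, d, -, hVV, hdiag, -, hnuc⟩ := exists_orthogonal_diagonalization_transpose_mul_self N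
  have hK : (Vᵀ * N * V)ᵀ * (Vᵀ * N * V) = diagonal d := by
    rw [← hdiag]
    simp only [transpose_mul, transpose_transpose, Matrix.mul_assoc]
    rw [← Matrix.mul_assoc V Vᵀ, hVV, Matrix.one_mul]
  calc N.trace = (Vᵀ * N * V).trace := by
        rw [trace_mul_comm (Vᵀ * N), ← Matrix.mul_assoc, hVV, Matrix.one_mul]
    _ ≤ ∑ i, √(((Vᵀ * N * V)ᵀ * (Vᵀ * N * V)) i i) :=
        trace_le_sum_sqrt_diag_transpose_mul_self _
    _ = nuclearNorm N := by simp only [hK, hnuc, diagonal_apply_eq]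

theorem exists_partialIsometry_trace_eq_nuclearNorm {m p : ℕ} (M : Matrix (Fin m) (Fin p) ℝ) :
    ∃ Q : Matrix (Fin m) (Fin p) ℝ, Q * Qᵀ * Q = Q ∧ (Qᵀ * M).trace = nuclearNorm M := by
  obtain ⟨V, d, hVV, -, hdiag, hd, hnuc⟩ := exists_orthogonal_diagonalization_transpose_mul_self M
  -- `V S Vᵀ` is the pseudo-inverse of `|M| = (Mᵀ M)^(1/2)` (thanks to `0⁻¹ = 0`), so the witness
  -- `M V S Vᵀ` is the polar factor of `M`.
  set S := diagonal fun i => (√(d i))⁻¹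
  have hST : Sᵀ = S := diagonal_transpose _
  have hVV' : ∀ {k : Type} (X : Matrix (Fin p) k ℝ), Vᵀ * (V * X) = X := fun X => by
    rw [← Matrix.mul_assoc, hVV, Matrix.one_mul]
  have hdiag' : ∀ {k : Type} (X : Matrix (Fin p) k ℝ),
      Vᵀ * (Mᵀ * (M * (V * X))) = diagonal d * X :=
    fun X => by rw [← hdiag]; simp only [Matrix.mul_assoc]
  refine ⟨M * V * S * Vᵀ, ?_, ?_⟩
  · have hS : S * (S * (diagonal d * (S * Vᵀ))) = S * Vᵀ := by
      simp only [← Matrix.mul_assoc, S, diagonal_mul_diagonal]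
      congr 2
      ext i
      obtain h | h := (hd i).eq_or_lt
      · simp [← h]
      · have := Real.sqrt_pos.2 h
        field_simp
        exact (Real.sq_sqrt h.le).symm
    simp only [transpose_mul, transpose_transpose, hST, Matrix.mul_assoc, hVV', hdiag', hS]
  · simp only [transpose_mul, transpose_transpose, hST, Matrix.mul_assoc]
    rw [trace_mul_comm, Matrix.mul_assoc, hdiag, diagonal_mul_diagonal, trace_diagonal, hnuc]
    exact Finset.sum_congr rfl fun i _ => by rw [inv_mul_eq_div, Real.div_sqrt]

theorem procrustes_zero_iff_gram_eq {n ds dt : ℕ}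
    (Rs : Matrix (Fin n) (Fin ds) ℝ) (Rt : Matrix (Fin n) (Fin dt) ℝ) :
    (Rt * Rtᵀ).trace + (Rs * Rsᵀ).trace - 2 * nuclearNorm (Rsᵀ * Rt) = 0 ↔
      Rs * Rsᵀ = Rt * Rtᵀ := by
  obtain ⟨Q, hQ, hQM⟩ := exists_partialIsometry_trace_eq_nuclearNorm (Rsᵀ * Rt)
  have hcross : (Qᵀ * (Rsᵀ * Rt)).trace = (Rs * Q * Rtᵀ).trace := by
    rw [← trace_transpose, transpose_mul, transpose_mul, transpose_transpose, transpose_transpose]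
    exact (trace_mul_cycle Rs Q Rtᵀ).symm
  have hD : (Rt * Rtᵀ).trace + (Rs * Rsᵀ).trace - 2 * nuclearNorm (Rsᵀ * Rt) =
      ((Rs * Q - Rt) * (Rs * Q - Rt)ᵀ).trace +
        ((Rs - Rs * Q * Qᵀ) * (Rs - Rs * Q * Qᵀ)ᵀ).trace := by
    rw [← hQM, hcross, add_comm (Rt * Rtᵀ).trace, trace_add_trace_sub_two_mul_trace_eq Rs Rt hQ]
  have hfit := trace_mul_transpose_self_nonneg (Rs * Q - Rt)
  have hres := trace_mul_transpose_self_nonneg (Rs - Rs * Q * Qᵀ)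
  constructor
  · intro h0
    have hRt : Rs * Q = Rt :=
      sub_eq_zero.mp (trace_mul_transpose_self_eq_zero_iff.mp (by linarith))
    have hRs : Rs = Rs * Q * Qᵀ :=
      sub_eq_zero.mp (trace_mul_transpose_self_eq_zero_iff.mp (by linarith))
    calc Rs * Rsᵀ = Rs * Q * Qᵀ * Rsᵀ := by rw [← hRs]
      _ = Rt * Rtᵀ := by rw [← hRt]; simp only [transpose_mul, Matrix.mul_assoc]
  · intro h
    have hgram : (Rsᵀ * Rt)ᵀ * (Rsᵀ * Rt) = (Rtᵀ * Rt)ᵀ * (Rtᵀ * Rt) := by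
      simp only [transpose_mul, transpose_transpose, Matrix.mul_assoc]
      rw [← Matrix.mul_assoc Rs, h, Matrix.mul_assoc]
    have hle : (Rt * Rtᵀ).trace ≤ nuclearNorm (Rsᵀ * Rt) := by
      rw [nuclearNorm_eq_of_transpose_mul_self_eq hgram, trace_mul_comm]
      exact trace_le_nuclearNorm _
    rw [h] at hD ⊢
    linarith
end
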